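/- arXiv:2403.18390 — 2 statements merged into one kernel-verified Lean document; each statement's English description precedes it below -/
import Mathlib

section
/- If α is a totally positive algebraic integer in a totally real number field K and there exists a totally positive element δ of the codifferent of O_K with Tr_{K/ℚ}(δα) = 1, then α is additively indecomposable, i.e., α cannot be written as β + γ with β, γ totally positive elements of O_K. -/
open NumberField

lemma aux_trace_pos (K : Type) [Field K] [NumberField K]
    (htotreal : Nat.card (K →+* ℝ) = Module.finrank ℚ K)
    (x : K) (hx : ∀ φ : K →+* ℝ, 0 < φ x) :
    0 < Algebra.trace ℚ K x := by
  have hinj : Function.Injective (fun φ : K →+* ℝ => (Complex.ofRealHom.comp φ)) := by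
    intro φ ψ h
    ext a
    have := DFunLike.congr_fun h a
    simpa using this
  have hcard : Nat.card (K →+* ℝ) = Nat.card (K →+* ℂ) := by
    rw [htotreal, Nat.card_eq_fintype_card, NumberField.Embeddings.card]
  have hbij : Function.Bijective (fun φ : K →+* ℝ => (Complex.ofRealHom.comp φ)) :=
    (Nat.bijective_iff_injective_and_card _).2 ⟨hinj, hcard⟩
  have key : algebraMap ℚ ℂ (Algebra.trace ℚ K x) = ∑ σ : K →ₐ[ℚ] ℂ, σ x :=
    trace_eq_sum_embeddings ℂ
  have hre : ((Algebra.trace ℚ K x : ℚ) : ℝ) = ∑ σ : K →ₐ[ℚ] ℂ, (σ x).re := by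
    have := congrArg Complex.re key
    simpa [Complex.re_sum] using this
  have hpos : ∀ σ : K →ₐ[ℚ] ℂ, 0 < (σ x).re := by
    intro σ
    obtain ⟨φ, hφ⟩ := hbij.2 σ.toRingHom
    have : σ x = (φ x : ℂ) := by
      have := congrArg (fun f => f x) hφ
      simpa using this.symm
    rw [this]
    simpa using hx φ
  have hne : Nonempty (K →ₐ[ℚ] ℂ) := by
    have h1 : Nonempty (K →+* ℂ) := by
      rw [← Fintype.card_pos_iff, NumberField.Embeddings.card K ℂ]
      exact Module.finrank_pos
    exact ⟨h1.some.toRatAlgHom⟩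
  have : (0 : ℝ) < ((Algebra.trace ℚ K x : ℚ) : ℝ) := by
    rw [hre]
    exact Finset.sum_pos (fun σ _ => hpos σ) Finset.univ_nonempty
  exact_mod_cast this

/-- If `α` is a totally positive algebraic integer in a totally real number field `K`
and there exists a totally positive element `δ` of the codifferent of `O_K` with
`Tr_{K/ℚ}(δα) = 1`, then `α` is additively indecomposable. -/
theorem stmt_0 (K : Type) [Field K] [NumberField K]
    (htotreal : Nat.card (K →+* ℝ) = Module.finrank ℚ K)
    (α : 𝓞 K) (hα : ∀ φ : K →+* ℝ, 0 < φ (α : K))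
    (δ : K)
    (hδpos : ∀ φ : K →+* ℝ, 0 < φ δ)
    (hδcod : ∀ β : 𝓞 K, ∃ m : ℤ, Algebra.trace ℚ K (δ * (β : K)) = (m : ℚ))
    (htr1 : Algebra.trace ℚ K (δ * (α : K)) = 1) :
    ¬ ∃ β γ : 𝓞 K, (∀ φ : K →+* ℝ, 0 < φ (β : K)) ∧
      (∀ φ : K →+* ℝ, 0 < φ (γ : K)) ∧ α = β + γ := by
  rintro ⟨β, γ, hβ, hγ, rfl⟩
  obtain ⟨m, hm⟩ := hδcod β
  obtain ⟨n, hn⟩ := hδcod γ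
  have hmpos : 0 < Algebra.trace ℚ K (δ * (β : K)) :=
    aux_trace_pos K htotreal _ (fun φ => by
      have := mul_pos (hδpos φ) (hβ φ); simpa using this)
  have hnpos : 0 < Algebra.trace ℚ K (δ * (γ : K)) :=
    aux_trace_pos K htotreal _ (fun φ => by
      have := mul_pos (hδpos φ) (hγ φ); simpa using this)
  have hsum : Algebra.trace ℚ K (δ * (β : K)) + Algebra.trace ℚ K (δ * (γ : K)) = 1 := by
    rw [← htr1]
    push_cast
    rw [mul_add, map_add]
  have hm1 : (1 : ℚ) ≤ (m : ℚ) := by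
    have : 0 < m := by exact_mod_cast hm ▸ hmpos
    exact_mod_cast this
  have hn1 : (1 : ℚ) ≤ (n : ℚ) := by
    have : 0 < n := by exact_mod_cast hn ▸ hnpos
    exact_mod_cast this
  rw [hm, hn] at hsum
  linarith
end

section
/- For the simplest cubic field K = ℚ(ρ), where ρ is the largest root of x³ − ax² − (a+3)x − 1 with a ≥ −1 an integer and O_K = ℤ[ρ]: the elements ε₁ = ρ² and ε₂ = 1 + 2ρ + ρ² are totally positive units of O_K. -/
open NumberField

/-- For Shanks' simplest cubic field `K = ℚ(ρ)`, `ρ` the largest root of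
`x³ − ax² − (a+3)x − 1` (`a ≥ −1`), with `O_K = ℤ[ρ]`: the elements `ρ²` and
`1 + 2ρ + ρ²` are totally positive units of `O_K`. -/
theorem stmt_11 (K : Type) [Field K] [NumberField K]
    (hdeg : Module.finrank ℚ K = 3)
    (htotreal : Nat.card (K →+* ℝ) = 3)
    (a : ℤ) (ha : -1 ≤ a)
    (ρ : K) (hρ : ρ ^ 3 - (a : K) * ρ ^ 2 - ((a : K) + 3) * ρ - 1 = 0)
    (hgen : IntermediateField.adjoin ℚ {ρ} = ⊤)
    (hOK : ∀ ξ : K, IsIntegral ℤ ξ ↔ ξ ∈ Algebra.adjoin ℤ ({ρ} : Set K))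
    -- ρ is the largest root: under some real embedding φ₀, every real root of the
    -- polynomial is at most φ₀ ρ
    (φ₀ : K →+* ℝ)
    (hlargest : ∀ t : ℝ, t ^ 3 - (a : ℝ) * t ^ 2 - ((a : ℝ) + 3) * t - 1 = 0 → t ≤ φ₀ ρ) :
    (∃ u : (𝓞 K)ˣ, ((u : 𝓞 K) : K) = ρ ^ 2) ∧
    (∃ u : (𝓞 K)ˣ, ((u : 𝓞 K) : K) = 1 + 2 * ρ + ρ ^ 2) ∧
    (∀ φ : K →+* ℝ, 0 < φ (ρ ^ 2)) ∧
    (∀ φ : K →+* ℝ, 0 < φ (1 + 2 * ρ + ρ ^ 2)) := by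
  -- ρ is an algebraic integer
  have hρint : IsIntegral ℤ ρ := (hOK ρ).mpr (Algebra.subset_adjoin rfl)
  set r : 𝓞 K := ⟨ρ, hρint⟩ with hr
  have hcoe : ((⟨ρ, hρint⟩ : 𝓞 K) : K) = ρ := rfl
  -- ρ * (ρ² - aρ - (a+3)) = 1
  have hinv1 : r * (r ^ 2 - (a : 𝓞 K) * r - ((a : 𝓞 K) + 3)) = 1 := by
    ext
    show ρ * (ρ ^ 2 - (a : K) * ρ - ((a : K) + 3)) = 1
    linear_combination hρ
  -- (1+ρ) * (-(ρ² - (a+1)ρ - 2)) = 1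
  have hinv2 : (1 + r) * (-(r ^ 2 - ((a : 𝓞 K) + 1) * r - 2)) = 1 := by
    ext
    show (1 + ρ) * (-(ρ ^ 2 - ((a : K) + 1) * ρ - 2)) = 1
    linear_combination -hρ
  have hK1 : ρ * (ρ ^ 2 - (a : K) * ρ - ((a : K) + 3)) = 1 := by linear_combination hρ
  have hK2 : (1 + ρ) * (-(ρ ^ 2 - ((a : K) + 1) * ρ - 2)) = 1 := by linear_combination -hρ
  have hρne : ∀ φ : K →+* ℝ, φ ρ ≠ 0 := by
    intro φ h
    have := congrArg φ hK1
    rw [map_mul, map_one, h, zero_mul] at this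
    exact zero_ne_one this
  have h1ρne : ∀ φ : K →+* ℝ, φ (1 + ρ) ≠ 0 := by
    intro φ h
    have := congrArg φ hK2
    rw [map_mul, map_one, h, zero_mul] at this
    exact zero_ne_one this
  have hsq1 : (r * r) * ((r ^ 2 - (a : 𝓞 K) * r - ((a : 𝓞 K) + 3)) *
      (r ^ 2 - (a : 𝓞 K) * r - ((a : 𝓞 K) + 3))) = 1 := by
    linear_combination (r * (r ^ 2 - (a : 𝓞 K) * r - ((a : 𝓞 K) + 3)) + 1) * hinv1
  have hsq2 : ((1 + r) * (1 + r)) * ((-(r ^ 2 - ((a : 𝓞 K) + 1) * r - 2)) *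
      (-(r ^ 2 - ((a : 𝓞 K) + 1) * r - 2))) = 1 := by
    linear_combination ((1 + r) * (-(r ^ 2 - ((a : 𝓞 K) + 1) * r - 2)) + 1) * hinv2
  refine ⟨⟨Units.mkOfMulEqOne _ _ hsq1, by show ρ * ρ = ρ ^ 2; ring⟩,
    ⟨Units.mkOfMulEqOne _ _ hsq2, by show (1 + ρ) * (1 + ρ) = 1 + 2 * ρ + ρ ^ 2; ring⟩, ?_, ?_⟩
  · intro φ
    rw [map_pow]
    exact lt_of_le_of_ne (sq_nonneg _) (Ne.symm (pow_ne_zero 2 (hρne φ)))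
  · intro φ
    have : φ (1 + 2 * ρ + ρ ^ 2) = φ (1 + ρ) ^ 2 := by
      rw [← map_pow]; ring_nf
    rw [this]
    exact lt_of_le_of_ne (sq_nonneg _) (Ne.symm (pow_ne_zero 2 (h1ρne φ)))
end
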